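/- Let Z₀ = λI with λ > 0, and for each t let Z_t = Z_{t−1} + Σ_{i∈S_t} g_{t,i} g_{t,i}ᵀ with g_{t,i} ∈ ℝᵖ. Suppose for every t, Σ_{i∈S_t} g_{t,i}ᵀ Z_{t−1}⁻¹ g_{t,i} ≤ 1. Then Σ_{t=1}^{T} Σ_{i∈S_t} g_{t,i}ᵀ Z_{t−1}⁻¹ g_{t,i} ≤ 2 · log( det(Z_T) / det(λI) ). -/

import Mathlib

/-!
Write the update of round `t` as `Z (t + 1) = Z t + G Gᵀ`, the columns of `G` being the vectors
`g t i`. The matrix determinant lemma gives `det Z (t + 1) = det Z t * det (1 + Gᵀ (Z t)⁻¹ G)`,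
and `det (1 + M) ≥ 1 + tr M` for positive semidefinite `M` (expand the product of its
eigenvalues), so each round multiplies the determinant by at least `1 + a t`, where `a t` is that
round's potential `tr (Gᵀ (Z t)⁻¹ G)`. Telescoping the logarithms and using `a ≤ 2 log (1 + a)`
on `[0, 1]` gives the bound.
-/

open Matrix Finset

theorem Finset.one_add_sum_le_prod_one_add {ι R : Type*} [CommRing R] [LinearOrder R]
    [IsStrictOrderedRing R] (s : Finset ι) {f : ι → R} (hf : ∀ i ∈ s, 0 ≤ f i) :
    1 + ∑ i ∈ s, f i ≤ ∏ i ∈ s, (1 + f i) := by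
  induction s using Finset.cons_induction with
  | empty => simp
  | cons a s _ ih =>
    have hs : ∀ i ∈ s, 0 ≤ f i := fun i hi => hf i (mem_cons_of_mem hi)
    rw [sum_cons, prod_cons]
    nlinarith [ih hs, sum_nonneg hs, hf a (mem_cons_self a s)]

theorem Real.le_two_mul_log_one_add {a : ℝ} (ha₀ : 0 ≤ a) (ha₁ : a ≤ 1) :
    a ≤ 2 * Real.log (1 + a) := by
  have hpos : 0 < 1 + a := by linarith
  calc a ≤ 2 * (1 - (1 + a)⁻¹) := by
        rw [show 2 * (1 - (1 + a)⁻¹) = 2 * a / (1 + a) by field_simp; ring, le_div_iff₀ hpos]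
        nlinarith
    _ ≤ 2 * Real.log (1 + a) := by gcongr; exact Real.one_sub_inv_le_log_of_pos hpos

namespace Matrix

variable {n : Type*} [Fintype n] [DecidableEq n]

theorem IsHermitian.det_one_add {𝕜 : Type*} [RCLike 𝕜] {M : Matrix n n 𝕜} (hM : M.IsHermitian) :
    det (1 + M) = ∏ i, (1 + (hM.eigenvalues i : 𝕜)) := by
  have : 1 + M = cfc (fun x : ℝ => 1 + x) M := by
    rw [cfc_add .., cfc_const_one .., cfc_id' ..]
  rw [this, hM.cfc_eq]
  simp [IsHermitian.cfc, -Unitary.conjStarAlgAut_apply]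

theorem PosSemidef.one_add_trace_le_det_one_add {M : Matrix n n ℝ} (hM : M.PosSemidef) :
    1 + M.trace ≤ det (1 + M) := by
  rw [hM.isHermitian.trace_eq_sum_eigenvalues, hM.isHermitian.det_one_add]
  simpa using one_add_sum_le_prod_one_add univ fun i _ => hM.eigenvalues_nonneg i

theorem PosDef.det_mul_one_add_trace_le_det_add_mul_transpose {m : Type*} [Fintype m]
    {A : Matrix n n ℝ} (hA : A.PosDef) (G : Matrix n m ℝ) :
    A.det * (1 + (Gᵀ * A⁻¹ * G).trace) ≤ (A + G * Gᵀ).det := by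
  classical
  have hM : (Gᵀ * A⁻¹ * G).PosSemidef := by
    simpa using hA.inv.posSemidef.conjTranspose_mul_mul_same G
  rw [det_add_mul G Gᵀ hA.det_pos.ne'.isUnit]
  exact mul_le_mul_of_nonneg_left hM.one_add_trace_le_det_one_add hA.det_pos.le

theorem PosDef.det_mul_one_add_sum_le_det_add_sum_vecMulVec {κ : Type*}
    {A : Matrix n n ℝ} (hA : A.PosDef) (s : Finset κ) (v : κ → n → ℝ) :
    A.det * (1 + ∑ k ∈ s, v k ⬝ᵥ (A⁻¹ *ᵥ v k)) ≤ (A + ∑ k ∈ s, vecMulVec (v k) (v k)).det := by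
  let G : Matrix n s ℝ := of fun i k => v k i
  have hGG : G * Gᵀ = ∑ k ∈ s, vecMulVec (v k) (v k) := by
    ext i j; simp [G, mul_apply, sum_apply, vecMulVec_apply, sum_attach s fun k => v k i * v k j]
  have htr : (Gᵀ * A⁻¹ * G).trace = ∑ k ∈ s, v k ⬝ᵥ (A⁻¹ *ᵥ v k) := by
    rw [trace_mul_cycle, trace_mul_comm, hGG, mul_sum, trace_sum]
    exact sum_congr rfl fun k _ => by rw [mul_vecMulVec, trace_vecMulVec, dotProduct_comm]
  simpa only [hGG, htr] using hA.det_mul_one_add_trace_le_det_add_mul_transpose G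

end Matrix

open Matrix in
theorem elliptical_potential (p T : ℕ) (ι : Type*) (l : ℝ) (hl : 0 < l)
    (S : ℕ → Finset ι) (g : ℕ → ι → (Fin p → ℝ))
    (Z : ℕ → Matrix (Fin p) (Fin p) ℝ)
    (hZ0 : Z 0 = l • (1 : Matrix (Fin p) (Fin p) ℝ))
    (hrec : ∀ t, Z (t + 1) = Z t + ∑ i ∈ S t, vecMulVec (g t i) (g t i))
    (hbound : ∀ t, ∑ i ∈ S t, g t i ⬝ᵥ ((Z t)⁻¹ *ᵥ g t i) ≤ 1) :
    ∑ t ∈ Finset.range T, ∑ i ∈ S t, g t i ⬝ᵥ ((Z t)⁻¹ *ᵥ g t i) ≤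
      2 * Real.log ((Z T).det / (l • (1 : Matrix (Fin p) (Fin p) ℝ)).det) := by
  set a : ℕ → ℝ := fun t => ∑ i ∈ S t, g t i ⬝ᵥ ((Z t)⁻¹ *ᵥ g t i)
  have hZ : ∀ t, (Z t).PosDef := by
    intro t
    induction t with
    | zero => simpa [hZ0] using PosDef.one.smul hl
    | succ t ih =>
      rw [hrec t]
      exact ih.add_posSemidef <| posSemidef_sum _ fun i _ => by
        simpa using posSemidef_vecMulVec_self_star (g t i)
  have ha : ∀ t, 0 ≤ a t := fun t => sum_nonneg fun i _ => by
    simpa using (hZ t).inv.posSemidef.dotProduct_mulVec_nonneg (g t i)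
  have hstep : ∀ t, Real.log (1 + a t) ≤ Real.log (Z (t + 1)).det - Real.log (Z t).det := by
    intro t
    have h := (hZ t).det_mul_one_add_sum_le_det_add_sum_vecMulVec (S t) (g t)
    rw [← hrec] at h
    have h1a : 0 < 1 + a t := by linarith [ha t]
    rw [le_sub_iff_add_le', ← Real.log_mul (hZ t).det_pos.ne' h1a.ne']
    exact Real.log_le_log (mul_pos (hZ t).det_pos h1a) h
  calc ∑ t ∈ range T, a t ≤ ∑ t ∈ range T, 2 * Real.log (1 + a t) :=
        sum_le_sum fun t _ => Real.le_two_mul_log_one_add (ha t) (hbound t)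
    _ ≤ ∑ t ∈ range T, 2 * (Real.log (Z (t + 1)).det - Real.log (Z t).det) := by
        gcongr with t; exact hstep t
    _ = 2 * Real.log ((Z T).det / (Z 0).det) := by
        rw [← mul_sum, sum_range_sub (fun t => Real.log (Z t).det),
          Real.log_div (hZ T).det_pos.ne' (hZ 0).det_pos.ne']
    _ = _ := by rw [hZ0]
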